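/- The word x_5 contains 'almost 3/2-powers' with arbitrarily large periods: for infinitely many integers p > 10 there exist a position i and a length n with n > p such that x_5[i+j] = x_5[i+j+p] for all 0 ≤ j < n − p and 2n + 4 ≥ 3p. In particular there are factors of x_5 with period p arbitrarily large whose exponent n/p is at least 3/2 − 2/p, so the exponents of these factors tend to the critical exponent 3/2. -/

import Mathlib

/-!
Let `Pₙ, Hₙ` be the Pell and half-companion Pell numbers, `Hₙ² - 2Pₙ² = (-1)ⁿ`. Since
`c_α[m] = ⌊(m+1)√2⌋ - ⌊m√2⌋ - 1`, the letter `x₅[i]` is determined by `⌊(i+1)√2⌋` and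
`⌊(i+2)√2⌋` modulo `4` and by the parity of `i`; so `x₅` has period `2Hₙ` on every stretch
where `⌊m√2⌋` jumps by exactly `4Pₙ` under `m ↦ m + 2Hₙ`. As `2√2 Hₙ - 4Pₙ = ±4 / (√2 Hₙ + 2Pₙ)` is tiny, this fails at `m` only if `m√2` is within
about `1/Pₙ` of an integer `w`; for `2Pₙ < m < 2Pₙ + Hₙ` this forces `|w² - 2m²| ≤ 11`.
Descent by the unit `√2 - 1` excludes norms of absolute value at most `8` in this window,
congruences exclude `10` and `11`, and norm `9` only occurs at `m = 3Pₙ`, where the jump is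
still right. This gives the factor of length `3Hₙ - 2` at position `2Pₙ` with period `2Hₙ`.
-/

/-- The characteristic Sturmian word with slope `α = √2 - 1`, indexed from 1:
`c_α[n] = ⌊α(n+1)⌋ - ⌊αn⌋`. -/
noncomputable def calpha (n : ℕ) : ℤ :=
  ⌊(Real.sqrt 2 - 1) * ((n : ℝ) + 1)⌋ - ⌊(Real.sqrt 2 - 1) * (n : ℝ)⌋

/-- `zcount m` = number of indices `1 ≤ j ≤ m` with `c_α[j] = 0`. -/
noncomputable def zcount (m : ℕ) : ℕ :=
  ((Finset.Icc 1 m).filter fun j => calpha j = 0).card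

/-- `ocount m` = number of indices `1 ≤ j ≤ m` with `c_α[j] = 1`. -/
noncomputable def ocount (m : ℕ) : ℕ :=
  ((Finset.Icc 1 m).filter fun j => calpha j = 1).card

/-- The infinite balanced word `x₅` over `{0,1,2,3,4}`, indexed from 0, obtained from
`c_α` by replacing the 0's by `(0102)^ω` and the 1's by `(34)^ω`. -/
noncomputable def x5 (i : ℕ) : ℕ :=
  if calpha (i + 1) = 0 then [0, 1, 0, 2].getD ((zcount (i + 1) - 1) % 4) 0
  else [3, 4].getD ((ocount (i + 1) - 1) % 2) 0

def pellPair : ℕ → ℕ × ℕ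
  | 0 => (0, 1)
  | n + 1 => ((pellPair n).1 + (pellPair n).2, 2 * (pellPair n).1 + (pellPair n).2)

def pellNumber (n : ℕ) : ℕ := (pellPair n).1

def halfCompanionPell (n : ℕ) : ℕ := (pellPair n).2

@[simp] lemma pellNumber_zero : pellNumber 0 = 0 := rfl

@[simp] lemma halfCompanionPell_zero : halfCompanionPell 0 = 1 := rfl

lemma pellNumber_succ (n : ℕ) : pellNumber (n + 1) = pellNumber n + halfCompanionPell n := rfl

lemma halfCompanionPell_succ (n : ℕ) :
    halfCompanionPell (n + 1) = 2 * pellNumber n + halfCompanionPell n := rfl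

lemma halfCompanionPell_pos (n : ℕ) : 0 < halfCompanionPell n := by
  induction n with
  | zero => simp
  | succ n ih => rw [halfCompanionPell_succ]; omega

lemma pellNumber_lt_succ (n : ℕ) : pellNumber n < pellNumber (n + 1) := by
  have := halfCompanionPell_pos n
  rw [pellNumber_succ]
  omega

lemma halfCompanionPell_lt_succ {n : ℕ} (hn : 0 < n) :
    halfCompanionPell n < halfCompanionPell (n + 1) := by
  obtain ⟨k, rfl⟩ := Nat.exists_eq_add_one_of_ne_zero hn.ne'
  rw [halfCompanionPell_succ (k + 1)]
  have := pellNumber_lt_succ k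
  omega

lemma two_le_pellNumber {n : ℕ} (hn : 2 ≤ n) : 2 ≤ pellNumber n := by
  induction n, hn using Nat.le_induction with
  | base => decide
  | succ n _ ih => exact ih.trans (pellNumber_lt_succ n).le

lemma seven_le_halfCompanionPell {n : ℕ} (hn : 3 ≤ n) : 7 ≤ halfCompanionPell n := by
  induction n, hn using Nat.le_induction with
  | base => decide
  | succ n hn ih => exact ih.trans (halfCompanionPell_lt_succ (by omega)).le

lemma halfCompanionPell_sq (n : ℕ) :
    (halfCompanionPell n : ℤ) ^ 2 = 2 * (pellNumber n : ℤ) ^ 2 + (-1) ^ n := by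
  induction n with
  | zero => simp
  | succ n ih => push_cast [pellNumber_succ, halfCompanionPell_succ]; linear_combination -ih

lemma descent_mem_window {b K σ A t D : ℤ} (hb : 2 ≤ b) (hK : 0 ≤ K)
    (hσ : σ = 1 ∨ σ = -1) (hpell : K ^ 2 = 2 * b ^ 2 + σ) (hD : 0 ≤ D) (hD8 : D ≤ 8)
    (hA : 2 * (b + K) < A) (hA' : A < 4 * b + 3 * K) (ht : 0 ≤ t)
    (hnorm : t ^ 2 - 2 * A ^ 2 = -σ * D) :
    2 * b < t - A ∧ t - A < 2 * b + K ∧ t ≤ 2 * A := by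
  have hK3 : 3 ≤ K := by
    by_contra! h
    have : K ^ 2 ≤ 4 := by nlinarith
    rcases hσ with rfl | rfl <;> nlinarith
  refine ⟨?_, ?_, ?_⟩
  · by_contra! h
    have := mul_self_le_mul_self ht (show t ≤ A + 2 * b by linarith)
    rcases hσ with rfl | rfl <;> nlinarith
  · by_contra! h
    have := mul_self_le_mul_self (by linarith) (show A + 2 * b + K ≤ t by linarith)
    rcases hσ with rfl | rfl <;> nlinarith
  · by_contra! h
    have := mul_self_lt_mul_self (by linarith) h
    rcases hσ with rfl | rfl <;> nlinarith

lemma two_le_of_mem_window {n : ℕ} {A : ℤ} (hA : 2 * pellNumber n < A)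
    (hA' : A < 2 * pellNumber n + halfCompanionPell n) : 2 ≤ n := by
  by_contra! hn
  have hH : halfCompanionPell n = 1 := by interval_cases n <;> rfl
  omega

lemma sq_sub_two_sq_ne_of_mem_window (n : ℕ) {A t D : ℤ} (ht : 0 ≤ t) (hD : 0 ≤ D)
    (hD8 : D ≤ 8) (hA : 2 * pellNumber n < A)
    (hA' : A < 2 * pellNumber n + halfCompanionPell n) :
    t ^ 2 - 2 * A ^ 2 ≠ (-1) ^ n * D := by
  induction n generalizing A t with
  | zero => exact absurd (two_le_of_mem_window hA hA') (by norm_num)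
  | succ n ih =>
    intro hnorm
    obtain hn | rfl | hn : n = 0 ∨ n = 1 ∨ 2 ≤ n := by omega
    · exact absurd (two_le_of_mem_window hA hA') (by omega)
    · have hP : pellNumber (1 + 1) = 2 := rfl
      have hH : halfCompanionPell (1 + 1) = 3 := rfl
      rw [hP] at hA hA'
      rw [hH] at hA'
      rw [show ((-1 : ℤ)) ^ (1 + 1) = 1 by norm_num, one_mul] at hnorm
      push_cast at hA hA'
      have : t < 9 := by nlinarith
      interval_cases A <;> interval_cases t <;> omega
    · have hb : (2 : ℤ) ≤ pellNumber n := by exact_mod_cast two_le_pellNumber hn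
      push_cast [pellNumber_succ, halfCompanionPell_succ] at hA hA'
      -- `(2A - t) + (t - A)√2 = (t + A√2)(√2 - 1)` has norm `-(t² - 2A²)`
      obtain ⟨h₁, h₂, h₃⟩ := descent_mem_window hb (by positivity) (neg_one_pow_eq_or ℤ n)
        (halfCompanionPell_sq n) hD hD8 hA (by linarith) ht (by rw [hnorm]; ring)
      exact ih (A := t - A) (t := 2 * A - t) (by linarith) h₁ (by linarith)
        (by linear_combination -hnorm)

lemma three_dvd_of_three_dvd_sq_sub_two_sq {x y : ℤ} (h : 3 ∣ x ^ 2 - 2 * y ^ 2) :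
    3 ∣ x ∧ 3 ∣ y := by
  have hmod : ∀ a b : ZMod 3, a ^ 2 - 2 * b ^ 2 = 0 → a = 0 ∧ b = 0 := by decide
  have h3 := (ZMod.intCast_zmod_eq_zero_iff_dvd _ 3).mpr h
  push_cast at h3
  obtain ⟨hx, hy⟩ := hmod _ _ h3
  exact ⟨(ZMod.intCast_zmod_eq_zero_iff_dvd x 3).mp hx,
    (ZMod.intCast_zmod_eq_zero_iff_dvd y 3).mp hy⟩

lemma abs_sq_sub_two_sq_ne_ten_or_eleven (x y : ℤ) :
    |x ^ 2 - 2 * y ^ 2| ≠ 10 ∧ |x ^ 2 - 2 * y ^ 2| ≠ 11 := by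
  have hmod : ∀ a b : ZMod 16, a ^ 2 - 2 * b ^ 2 ≠ 10 ∧ a ^ 2 - 2 * b ^ 2 ≠ -10 ∧
      a ^ 2 - 2 * b ^ 2 ≠ 11 ∧ a ^ 2 - 2 * b ^ 2 ≠ -11 := by decide
  obtain ⟨h10, h10', h11, h11'⟩ := hmod x y
  constructor <;> intro h <;> rcases abs_eq (by norm_num) |>.mp h with h | h
  all_goals
    have := congrArg (fun z : ℤ => (z : ZMod 16)) h
    push_cast at this
    contradiction

lemma sq_lt_twelve_mul_sq_of_mem_window {n : ℕ} {A : ℤ} (hA : 2 * pellNumber n < A)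
    (hA' : A < 2 * pellNumber n + halfCompanionPell n) : A ^ 2 < 12 * (pellNumber n : ℤ) ^ 2 := by
  have hP : (2 : ℤ) ≤ pellNumber n := by
    exact_mod_cast two_le_pellNumber (two_le_of_mem_window hA hA')
  have hpell := halfCompanionPell_sq n
  have hPH : 2 * pellNumber n * halfCompanionPell n ≤ 3 * (pellNumber n : ℤ) ^ 2 := by
    by_contra! h
    have := mul_self_lt_mul_self (by positivity) h
    rcases neg_one_pow_eq_or ℤ n with hσ | hσ <;> rw [hσ] at hpell <;> nlinarith
  have : A ^ 2 ≤ (2 * pellNumber n + halfCompanionPell n - 1) ^ 2 := by nlinarith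
  rcases neg_one_pow_eq_or ℤ n with hσ | hσ <;> rw [hσ] at hpell <;> nlinarith

lemma eq_three_mul_of_norm_nine (n : ℕ) {A w : ℤ} (hA : 3 * pellNumber n ≤ A)
    (hA' : A < 2 * pellNumber n + halfCompanionPell n) (hw : 0 ≤ w)
    (hnorm : w ^ 2 - 2 * A ^ 2 = (-1) ^ n * 9) :
    A = 3 * pellNumber n ∧ w = 3 * halfCompanionPell n := by
  have hpell := halfCompanionPell_sq n
  obtain ⟨⟨w₁, rfl⟩, ⟨A₁, rfl⟩⟩ :=
    three_dvd_of_three_dvd_sq_sub_two_sq ⟨3 * (-1) ^ n, by rw [hnorm]; ring⟩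
  have hnorm₁ : w₁ ^ 2 - 2 * A₁ ^ 2 = (-1) ^ n := by linarith
  -- otherwise `(2w₁, 2A₁)` would have norm `4 (-1)ⁿ` inside the window
  have hA₁ : A₁ = pellNumber n := by
    refine le_antisymm (not_lt.mp fun hlt ↦ ?_) (by linarith)
    exact sq_sub_two_sq_ne_of_mem_window n (A := 2 * A₁) (t := 2 * w₁) (D := 4) (by linarith)
      (by norm_num) (by norm_num) (by linarith) (by linarith) (by linear_combination 4 * hnorm₁)
  subst hA₁
  have : w₁ = halfCompanionPell n := by nlinarith
  exact ⟨rfl, by rw [this]⟩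

lemma window_dichotomy (n : ℕ) {A w D : ℤ} (hA : 2 * pellNumber n < A)
    (hA' : A < 2 * pellNumber n + halfCompanionPell n) (hw : 0 ≤ w) (hD : 0 ≤ D)
    (hnorm : w ^ 2 - 2 * A ^ 2 = (-1) ^ n * D) :
    0 < (-1) ^ n * (pellNumber n * w - halfCompanionPell n * A) ∨
      A = 3 * pellNumber n ∧ w = 3 * halfCompanionPell n := by
  have hpell := halfCompanionPell_sq n
  have hH : (1 : ℤ) ≤ halfCompanionPell n := Nat.one_le_cast.mpr (halfCompanionPell_pos n)
  by_cases hlt : A ^ 2 < (pellNumber n : ℤ) ^ 2 * D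
  · left
    -- `(P w)² - (H A)² = (-1)ⁿ (P² D - A²)`
    have hprod : 0 < (-1) ^ n * (pellNumber n * w - halfCompanionPell n * A) *
        (pellNumber n * w + halfCompanionPell n * A) := by
      rcases neg_one_pow_eq_or ℤ n with hσ | hσ <;> rw [hσ] at hnorm hpell ⊢ <;> nlinarith
    exact pos_of_mul_pos_left hprod (by nlinarith)
  right
  have hD11 : D ≤ 11 := by nlinarith [sq_lt_twelve_mul_sq_of_mem_window hA hA']
  have hD9 : D = 9 := by
    by_contra hD9
    rcases Int.lt_or_le D 9 with hD8 | hD10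
    · exact sq_sub_two_sq_ne_of_mem_window n hw hD (by omega) hA hA' hnorm
    · have habs : |w ^ 2 - 2 * A ^ 2| = D := by
        rw [hnorm, abs_mul, abs_neg_one_pow, one_mul, abs_of_nonneg hD]
      have := abs_sq_sub_two_sq_ne_ten_or_eleven w A
      omega
  subst hD9
  exact eq_three_mul_of_norm_nine n (by nlinarith) hA' hw hnorm

lemma window_shift_sq_bounds (n : ℕ) {A u : ℤ} (hA : 2 * pellNumber n < A)
    (hA' : A < 2 * pellNumber n + halfCompanionPell n) (hu : 0 ≤ u) (hu₁ : u ^ 2 ≤ 2 * A ^ 2)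
    (hu₂ : 2 * A ^ 2 < (u + 1) ^ 2) :
    (u + 4 * pellNumber n) ^ 2 ≤ 2 * (A + 2 * halfCompanionPell n) ^ 2 ∧
      2 * (A + 2 * halfCompanionPell n) ^ 2 < (u + 4 * pellNumber n + 1) ^ 2 := by
  have hpell := halfCompanionPell_sq n
  have hP : (0 : ℤ) ≤ pellNumber n := by positivity
  have hH : (0 : ℤ) ≤ halfCompanionPell n := by positivity
  -- `2√2 H - 4P` has the sign of `(-1)ⁿ`, so only the bound on that side is delicate
  rcases neg_one_pow_eq_or ℤ n with hσ | hσ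
  · have hPu : pellNumber n * u < halfCompanionPell n * A := by
      refine lt_of_pow_lt_pow_left₀ 2 (by nlinarith) ?_
      rw [hσ] at hpell
      nlinarith
    have := window_dichotomy n hA hA' (w := u + 1) (D := (u + 1) ^ 2 - 2 * A ^ 2)
      (by linarith) (by linarith) (by rw [hσ, one_mul])
    rw [hσ] at this hpell
    constructor
    · nlinarith
    · rcases this with h | ⟨rfl, h⟩ <;> nlinarith
  · have hPu : halfCompanionPell n * A < pellNumber n * (u + 1) := by
      refine lt_of_pow_lt_pow_left₀ 2 (by positivity) ?_
      rw [hσ] at hpell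
      nlinarith
    have := window_dichotomy n hA hA' (w := u) (D := 2 * A ^ 2 - u ^ 2) hu (by linarith)
      (by rw [hσ, neg_one_mul, neg_sub])
    rw [hσ] at this hpell
    constructor
    · rcases this with h | ⟨rfl, h⟩ <;> nlinarith
    · nlinarith

def floorSqrtTwoMul (m : ℕ) : ℕ := Nat.sqrt (2 * m ^ 2)

lemma floor_sqrt_two_mul_natCast (m : ℕ) : ⌊√2 * m⌋ = floorSqrtTwoMul m := by
  rw [floorSqrtTwoMul, ← Real.floor_real_sqrt_eq_nat_sqrt]
  push_cast
  rw [Real.sqrt_mul zero_le_two, Real.sqrt_sq m.cast_nonneg]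

lemma le_floorSqrtTwoMul (m : ℕ) : m ≤ floorSqrtTwoMul m :=
  Nat.le_sqrt'.mpr (by nlinarith)

lemma floorSqrtTwoMul_le (m : ℕ) : floorSqrtTwoMul m ≤ 2 * m :=
  calc floorSqrtTwoMul m ≤ Nat.sqrt ((2 * m) ^ 2) := Nat.sqrt_le_sqrt (by nlinarith)
    _ = 2 * m := Nat.sqrt_eq' _

lemma floorSqrtTwoMul_succ_bounds (m : ℕ) :
    floorSqrtTwoMul m + 1 ≤ floorSqrtTwoMul (m + 1) ∧
      floorSqrtTwoMul (m + 1) ≤ floorSqrtTwoMul m + 2 := by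
  have h₁ := Nat.sqrt_le' (2 * m ^ 2)
  have h₂ := Nat.lt_succ_sqrt' (2 * m ^ 2)
  have hm := le_floorSqrtTwoMul m
  have hm' := floorSqrtTwoMul_le m
  unfold floorSqrtTwoMul at *
  constructor
  · exact Nat.le_sqrt'.mpr (by nlinarith)
  · exact Nat.lt_succ_iff.mp (Nat.sqrt_lt'.mpr (by nlinarith))

lemma floorSqrtTwoMul_add_of_mem_window (n : ℕ) {A : ℕ} (hA : 2 * pellNumber n < A)
    (hA' : A < 2 * pellNumber n + halfCompanionPell n) :
    floorSqrtTwoMul (A + 2 * halfCompanionPell n) = floorSqrtTwoMul A + 4 * pellNumber n := by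
  have hu₁ := Nat.sqrt_le' (2 * A ^ 2)
  have hu₂ := Nat.lt_succ_sqrt' (2 * A ^ 2)
  obtain ⟨h₁, h₂⟩ := window_shift_sq_bounds n (A := A) (u := floorSqrtTwoMul A)
    (by exact_mod_cast hA) (by exact_mod_cast hA') (by positivity) (by exact_mod_cast hu₁)
    (by exact_mod_cast hu₂)
  exact (Nat.eq_sqrt'.mpr ⟨by exact_mod_cast h₁, by exact_mod_cast h₂⟩).symm

lemma calpha_eq (m : ℕ) :
    calpha m = floorSqrtTwoMul (m + 1) - floorSqrtTwoMul m - 1 := by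
  have h (k : ℕ) : ⌊(√2 - 1) * k⌋ = floorSqrtTwoMul k - k := by
    rw [sub_mul, one_mul, Int.floor_sub_natCast, floor_sqrt_two_mul_natCast]
  rw [calpha, ← Nat.cast_succ, h, h]
  push_cast
  ring

lemma calpha_eq_zero_or_one (m : ℕ) : calpha m = 0 ∨ calpha m = 1 := by
  have := floorSqrtTwoMul_succ_bounds m
  rw [calpha_eq]
  omega

lemma zcount_succ (m : ℕ) :
    zcount (m + 1) = zcount m + if calpha (m + 1) = 0 then 1 else 0 := by
  rw [zcount, zcount, Finset.card_filter, Finset.card_filter, Finset.sum_Icc_succ_top (by omega)]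

lemma ocount_succ (m : ℕ) :
    ocount (m + 1) = ocount m + if calpha (m + 1) = 1 then 1 else 0 := by
  rw [ocount, ocount, Finset.card_filter, Finset.card_filter, Finset.sum_Icc_succ_top (by omega)]

lemma ocount_eq (m : ℕ) : (ocount m : ℤ) = floorSqrtTwoMul (m + 1) - m - 1 := by
  induction m with
  | zero => simp [ocount, floorSqrtTwoMul]
  | succ m ih =>
    have := calpha_eq (m + 1)
    rcases calpha_eq_zero_or_one (m + 1) with h | h <;>
      simp only [ocount_succ, h, zero_ne_one, ↓reduceIte, add_zero, Nat.cast_add, Nat.cast_one] <;>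
      omega

lemma zcount_add_ocount (m : ℕ) : zcount m + ocount m = m := by
  induction m with
  | zero => simp [zcount, ocount]
  | succ m ih =>
    rcases calpha_eq_zero_or_one (m + 1) with h | h <;>
      simp only [zcount_succ, ocount_succ, h, zero_ne_one, one_ne_zero, ↓reduceIte, add_zero] <;>
      omega

lemma x5_add_eq {i p q : ℕ} (hp : 2 ∣ p) (hq : 4 ∣ q)
    (h₁ : floorSqrtTwoMul (i + 1 + p) = floorSqrtTwoMul (i + 1) + q)
    (h₂ : floorSqrtTwoMul (i + 2 + p) = floorSqrtTwoMul (i + 2) + q) :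
    x5 (i + p) = x5 i := by
  have hi : i + p + 1 + 1 = i + 2 + p := by ring
  have hcalpha : calpha (i + p + 1) = calpha (i + 1) := by
    rw [calpha_eq, calpha_eq, hi, show i + p + 1 = i + 1 + p by ring, h₁, h₂]
    push_cast
    ring
  have hocount : (ocount (i + p + 1) : ℤ) = ocount (i + 1) + q - p := by
    rw [ocount_eq, ocount_eq, hi, h₂]
    push_cast
    ring
  have hzcount : (zcount (i + p + 1) : ℤ) = zcount (i + 1) + 2 * p - q := by
    have := zcount_add_ocount (i + 1)
    have := zcount_add_ocount (i + p + 1)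
    omega
  have hz := zcount_succ i
  have ho := ocount_succ i
  have hz' := zcount_succ (i + p)
  have ho' := ocount_succ (i + p)
  rw [hcalpha] at hz' ho'
  rw [x5, x5, hcalpha]
  rcases calpha_eq_zero_or_one (i + 1) with h | h <;>
    simp only [h, zero_ne_one, one_ne_zero, ↓reduceIte] at hz ho hz' ho' ⊢ <;>
    congr 1 <;> omega

lemma x5_periodic_of_mem_window (n j : ℕ) (hj : j + 2 < halfCompanionPell n) :
    x5 (2 * pellNumber n + j) = x5 (2 * pellNumber n + j + 2 * halfCompanionPell n) := by
  refine (x5_add_eq (q := 4 * pellNumber n) (dvd_mul_right 2 _) (dvd_mul_right 4 _) ?_ ?_).symm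
  · exact floorSqrtTwoMul_add_of_mem_window n (by omega) (by omega)
  · exact floorSqrtTwoMul_add_of_mem_window n (by omega) (by omega)

/-- `x₅` contains "almost `3/2`-powers" with arbitrarily large periods: the set of
periods `p > 10` for which some factor of `x₅` of length `n > p` has period `p` and
`2n + 4 ≥ 3p` is infinite. -/
theorem x5_almost_three_halves_powers :
    {p : ℕ | 10 < p ∧ ∃ i n : ℕ, p < n ∧ 3 * p ≤ 2 * n + 4 ∧
      ∀ j, j + p < n → x5 (i + j) = x5 (i + j + p)}.Infinite := by
  have hmono : StrictMono fun k ↦ 2 * halfCompanionPell (k + 3) :=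
    strictMono_nat_of_lt_succ fun k ↦ by
      simpa using halfCompanionPell_lt_succ (n := k + 3) (by omega)
  refine Set.infinite_of_injective_forall_mem hmono.injective fun k ↦ ?_
  have h7 := seven_le_halfCompanionPell (n := k + 3) (by omega)
  refine ⟨by omega, 2 * pellNumber (k + 3), 3 * halfCompanionPell (k + 3) - 2, by omega, by omega,
    fun j hj ↦ x5_periodic_of_mem_window (k + 3) j (by omega)⟩
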